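/- Let β = 2^{-1/3} and let α_{k,i} be the family of coefficients defined below. Then there exists a constant C > 0 such that |1 - α_{k,i}| ≤ C β^{2k} for all k ≥ 0 and all 0 ≤ i ≤ k. In particular α_{k,i} → 1 as k → ∞, uniformly in i. -/
import Mathlib


noncomputable def β : ℝ := (2 : ℝ) ^ (-(1:ℝ)/3)

/-- The coefficients `α_{k,i}` from the paper. -/
noncomputable def alph (k i : ℕ) : ℝ :=
  if k = 0 then (1 + β ^ 4 - β⁻¹) / (1 - β ^ 7 - β ^ 11)
  else if i = 0 ∨ i = k then
    (1 - β ^ (2 * k + 2)) * (1 + β ^ (2 * k + 7))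
      / (1 - β ^ (2 * k + 7) - β ^ (4 * k + 11))
  else
    (1 - β ^ (3 * k + 6) * Real.cosh (((k : ℝ) - 2 * i) * Real.log β))
      / (1 - β ^ (2 * k + 7) - β ^ (4 * k + 11))

lemma beta_pos : 0 < β := Real.rpow_pos_of_pos two_pos _

lemma beta_lt_one : β < 1 :=
  Real.rpow_lt_one_of_one_lt_of_neg one_lt_two (by norm_num)

lemma beta_cube : β ^ 3 = 1/2 := by
  unfold β
  rw [← Real.rpow_natCast ((2:ℝ) ^ (-(1:ℝ)/3)) 3, ← Real.rpow_mul (by norm_num : (0:ℝ) ≤ 2)]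
  norm_num

lemma beta_mono {m n : ℕ} (h : m ≤ n) : β ^ n ≤ β ^ m :=
  pow_le_pow_of_le_one beta_pos.le beta_lt_one.le h

lemma denom_ge (k : ℕ) : 5/8 ≤ 1 - β ^ (2*k+7) - β ^ (4*k+11) := by
  have h1 : β ^ (2*k+7) ≤ β ^ 6 := beta_mono (by omega)
  have h2 : β ^ (4*k+11) ≤ β ^ 9 := beta_mono (by omega)
  have h6 : β ^ 6 = 1/4 := by
    have : β ^ 6 = (β ^ 3) ^ 2 := by ring
    rw [this, beta_cube]; norm_num
  have h9 : β ^ 9 = 1/8 := by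
    have : β ^ 9 = (β ^ 3) ^ 3 := by ring
    rw [this, beta_cube]; norm_num
  linarith

lemma alph_boundary (k : ℕ) :
    |1 - ((1 - β ^ (2 * k + 2)) * (1 + β ^ (2 * k + 7))
      / (1 - β ^ (2 * k + 7) - β ^ (4 * k + 11)))| ≤ 8 * β ^ (2 * k) := by
  set D := 1 - β ^ (2*k+7) - β ^ (4*k+11) with hDdef
  have hD : 5/8 ≤ D := denom_ge k
  have hDpos : 0 < D := by linarith
  have key : 1 - (1 - β ^ (2*k+2)) * (1 + β ^ (2*k+7)) / D
      = (β^(2*k+2) - 2*β^(2*k+7) + β^(4*k+9) - β^(4*k+11)) / D := by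
    field_simp
    ring
  rw [key, abs_div, abs_of_pos hDpos]
  have e1 : β^(2*k+2) ≤ β^(2*k) := beta_mono (by omega)
  have e2 : β^(2*k+7) ≤ β^(2*k) := beta_mono (by omega)
  have e3 : β^(4*k+9) ≤ β^(2*k) := beta_mono (by omega)
  have e4 : β^(4*k+11) ≤ β^(2*k) := beta_mono (by omega)
  have p1 : 0 ≤ β^(2*k+2) := pow_nonneg beta_pos.le _
  have p2 : 0 ≤ β^(2*k+7) := pow_nonneg beta_pos.le _
  have p3 : 0 ≤ β^(4*k+9) := pow_nonneg beta_pos.le _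
  have p4 : 0 ≤ β^(4*k+11) := pow_nonneg beta_pos.le _
  have hnum : |β^(2*k+2) - 2*β^(2*k+7) + β^(4*k+9) - β^(4*k+11)| ≤ 5 * β^(2*k) := by
    rw [abs_le]; constructor <;> linarith
  rw [div_le_iff₀ hDpos]
  have hb : 0 ≤ β ^ (2*k) := pow_nonneg beta_pos.le _
  nlinarith [mul_le_mul_of_nonneg_left hD hb]

lemma alph_middle (k i : ℕ) (h1 : 1 ≤ i) (h2 : i < k) :
    |1 - ((1 - β ^ (3 * k + 6) * Real.cosh (((k : ℝ) - 2 * i) * Real.log β))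
      / (1 - β ^ (2 * k + 7) - β ^ (4 * k + 11)))| ≤ 8 * β ^ (2 * k) := by
  set D := 1 - β ^ (2*k+7) - β ^ (4*k+11) with hDdef
  have hD : 5/8 ≤ D := denom_ge k
  have hDpos : 0 < D := by linarith
  set c := Real.cosh (((k : ℝ) - 2 * i) * Real.log β) with hc
  have hcpos : 0 ≤ β ^ (3*k+6) * c := by
    have := Real.one_le_cosh (((k : ℝ) - 2 * i) * Real.log β)
    have := pow_nonneg beta_pos.le (3*k+6)
    nlinarith
  have hexp1 : Real.exp (((k : ℝ) - 2 * i) * Real.log β) = β ^ ((k:ℝ) - 2*i) := by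
    rw [Real.rpow_def_of_pos beta_pos, mul_comm]
  have hexp2 : Real.exp (-(((k : ℝ) - 2 * i) * Real.log β)) = β ^ (-((k:ℝ) - 2*i)) := by
    rw [Real.rpow_def_of_pos beta_pos, mul_comm]; ring_nf
  have hik : (i:ℝ) ≤ (k:ℝ) - 1 := by
    have : (i:ℝ) + 1 ≤ k := by exact_mod_cast h2
    linarith
  have hi1 : (1:ℝ) ≤ i := by exact_mod_cast h1
  have b1 : β ^ ((k:ℝ) - 2*i) ≤ β ^ (-((k:ℝ) - 2)) :=
    Real.rpow_le_rpow_of_exponent_ge beta_pos beta_lt_one.le (by linarith)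
  have b2 : β ^ (-((k:ℝ) - 2*i)) ≤ β ^ (-((k:ℝ) - 2)) :=
    Real.rpow_le_rpow_of_exponent_ge beta_pos beta_lt_one.le (by linarith)
  have hcle : c ≤ β ^ (-((k:ℝ) - 2)) := by
    rw [hc, Real.cosh_eq, hexp1, hexp2]
    linarith
  have hkey : β ^ (3*k+6) * c ≤ β ^ (2*k+8) := by
    have hpow : (β:ℝ) ^ (3*k+6) = β ^ ((3*k+6 : ℕ) : ℝ) := (Real.rpow_natCast _ _).symm
    have : β ^ ((3*k+6 : ℕ) : ℝ) * β ^ (-((k:ℝ) - 2)) = β ^ ((2*k+8 : ℕ) : ℝ) := by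
      rw [← Real.rpow_add beta_pos]
      congr 1
      push_cast
      ring
    calc β ^ (3*k+6) * c ≤ β ^ (3*k+6) * β ^ (-((k:ℝ) - 2)) := by
          have := pow_nonneg beta_pos.le (3*k+6); nlinarith
      _ = β ^ ((2*k+8:ℕ):ℝ) := by rw [hpow]; exact this
      _ = β ^ (2*k+8) := Real.rpow_natCast _ _
  have key : 1 - (1 - β ^ (3*k+6) * c) / D
      = (β ^ (3*k+6) * c - β^(2*k+7) - β^(4*k+11)) / D := by
    field_simp
    ring
  rw [key, abs_div, abs_of_pos hDpos]
  have e2 : β^(2*k+7) ≤ β^(2*k) := beta_mono (by omega)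
  have e4 : β^(4*k+11) ≤ β^(2*k) := beta_mono (by omega)
  have e8 : β^(2*k+8) ≤ β^(2*k) := beta_mono (by omega)
  have p2 : 0 ≤ β^(2*k+7) := pow_nonneg beta_pos.le _
  have p4 : 0 ≤ β^(4*k+11) := pow_nonneg beta_pos.le _
  have hnum : |β ^ (3*k+6) * c - β^(2*k+7) - β^(4*k+11)| ≤ 2 * β^(2*k) := by
    rw [abs_le]; constructor <;> linarith
  rw [div_le_iff₀ hDpos]
  have hb : 0 ≤ β ^ (2*k) := pow_nonneg beta_pos.le _
  nlinarith [mul_le_mul_of_nonneg_left hD hb]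

/-- Uniform estimate `|1 - α_{k,i}| ≤ C β^{2k}`; in particular `α_{k,i} → 1`
as `k → ∞`, uniformly in `i`. -/
theorem alph_estimate :
    ∃ C : ℝ, 0 < C ∧ ∀ k i : ℕ, i ≤ k → |1 - alph k i| ≤ C * β ^ (2 * k) := by
  refine ⟨max (|1 - alph 0 0| + 1) 8, lt_of_lt_of_le (by norm_num) (le_max_right _ _), ?_⟩
  intro k i hik
  have hb : 0 ≤ β ^ (2*k) := pow_nonneg beta_pos.le _
  rcases eq_or_ne k 0 with hk | hk
  · subst hk
    have hi0 : i = 0 := Nat.le_zero.mp hik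
    subst hi0
    simp only [Nat.mul_zero, pow_zero, mul_one]
    have h1 : |1 - alph 0 0| ≤ |1 - alph 0 0| + 1 := by linarith [abs_nonneg (1 - alph 0 0)]
    exact h1.trans (le_max_left _ _)
  · have h8 : (8:ℝ) ≤ max (|1 - alph 0 0| + 1) 8 := le_max_right _ _
    have hmul : 8 * β ^ (2*k) ≤ max (|1 - alph 0 0| + 1) 8 * β ^ (2*k) :=
      mul_le_mul_of_nonneg_right h8 hb
    by_cases hi : i = 0 ∨ i = k
    · have : alph k i = (1 - β ^ (2 * k + 2)) * (1 + β ^ (2 * k + 7))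
          / (1 - β ^ (2 * k + 7) - β ^ (4 * k + 11)) := by
        simp [alph, hk, hi]
      rw [this]
      exact (alph_boundary k).trans hmul
    · push_neg at hi
      have h1 : 1 ≤ i := Nat.one_le_iff_ne_zero.mpr hi.1
      have h2 : i < k := lt_of_le_of_ne hik hi.2
      have : alph k i = (1 - β ^ (3 * k + 6) * Real.cosh (((k : ℝ) - 2 * i) * Real.log β))
          / (1 - β ^ (2 * k + 7) - β ^ (4 * k + 11)) := by
        simp [alph, hk, hi.1, hi.2]
      rw [this]
      exact (alph_middle k i h1 h2).trans hmul
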